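/- arXiv:2004.11654 — 3 statements merged into one kernel-verified Lean document; each statement's English description precedes it below -/
import Mathlib

section
/- Let T > 0, let (Ω, 𝓕, P) be a probability space with a filtration (𝓕_s)_{s ∈ [0,T]}, and fix u ∈ [0,T]. Let f, f' : [0,T] × Ω → ℝ be progressively measurable with E[∫ᵤᵀ (|f(s)| + |f'(s)|) ds] < ∞, let L be an adapted process with continuous paths satisfying E[sup_{v ∈ [0,T]} |L(v)|] < ∞, and let ξ, ξ' be integrable 𝓕_T-measurable random variables. For a stopping time τ ∈ S_u define A_τ := ∫ᵤ^τ f(s) ds + L(τ) 1_{τ<T} + ξ 1_{τ=T} and A'_τ := ∫ᵤ^τ f'(s) ds + L(τ) 1_{τ<T} + ξ' 1_{τ=T}. If Y is an essential supremum of the family {E[A_τ | 𝓕_u] : τ ∈ S_u} and Y' is an essential supremum of the family {E[A'_τ | 𝓕_u] : τ ∈ S_u}, then |Y − Y'| ≤ E[ ∫ᵤᵀ |f(s) − f'(s)| ds + |ξ − ξ'| | 𝓕_u ] almost surely. -/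
/-!
For every stopping time `τ ∈ S_u` the two rewards differ pathwise by at most
`D = ∫ᵤᵀ |f - f'| ds + |ξ - ξ'|`. Monotonicity and additivity of conditional expectation give
`E[A_τ | 𝓕_u] ≤ E[A'_τ | 𝓕_u] + E[D | 𝓕_u] ≤ Y' + E[D | 𝓕_u]` a.s. for every `τ`, so by the
minimality of the essential supremum `Y ≤ Y' + E[D | 𝓕_u]`; exchanging the roles of the data
gives the other inequality.
-/

open MeasureTheory Set
open scoped ENNReal

/-- The stopped reward `∫ᵤ^τ f(s) ds + L(τ) 1_{τ<T} + ξ 1_{τ=T}`. -/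
noncomputable def reward {Ω : Type*} (f : ℝ → Ω → ℝ) (L : ℝ → Ω → ℝ) (ξ : Ω → ℝ)
    (u T : ℝ) (τ : Ω → ℝ) (ω : Ω) : ℝ :=
  (∫ s in u..(τ ω), f s ω) + (if τ ω < T then L (τ ω) ω else 0) +
    (if τ ω = T then ξ ω else 0)

/-- `Y` is an essential supremum of the family `X i`, `i : ι`, of integrable random
variables: `Y` is integrable, dominates every `X i` a.s., and is a.s. below every
random variable dominating the whole family a.s. -/
def IsEssSupFamily {Ω : Type*} {m0 : MeasurableSpace Ω} (P : Measure Ω)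
    {ι : Sort*} (X : ι → Ω → ℝ) (Y : Ω → ℝ) : Prop :=
  Integrable Y P ∧ (∀ i, ∀ᵐ ω ∂P, X i ω ≤ Y ω) ∧
    ∀ Z : Ω → ℝ, AEStronglyMeasurable Z P →
      (∀ i, ∀ᵐ ω ∂P, X i ω ≤ Z ω) → ∀ᵐ ω ∂P, Y ω ≤ Z ω

/-- The set `S_u` of stopping times of the filtration `ℱ` with values in `[u,T]` a.s. -/
def StoppingTimesIn {Ω : Type*} {m0 : MeasurableSpace Ω} (ℱ : Filtration ℝ m0)
    (P : Measure Ω) (u T : ℝ) : Set (Ω → ℝ) :=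
  {τ | IsStoppingTime ℱ (fun ω => (τ ω : WithTop ℝ)) ∧ ∀ᵐ ω ∂P, τ ω ∈ Icc u T}

namespace MeasureTheory.IsStronglyProgressive

variable {Ω E : Type*} {m0 : MeasurableSpace Ω} {ℱ : Filtration ℝ m0}

/-- Progressive measurability only controls `f` on `Iic T × Ω`; freezing time at `T` turns it
into a jointly measurable function that agrees with `f` there. -/
lemma stronglyMeasurable_uncurry_min [TopologicalSpace E] {f : ℝ → Ω → E}
    (hf : IsStronglyProgressive ℱ f) (T : ℝ) :
    StronglyMeasurable fun p : ℝ × Ω => f (min p.1 T) p.2 :=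
  (hf T).comp_measurable
    (g := fun p : ℝ × Ω => ((⟨min p.1 T, mem_Iic.2 (min_le_right _ _)⟩ : Iic T), p.2))
    ((measurable_fst.min measurable_const).subtype_mk.prodMk (measurable_snd.mono le_rfl (ℱ.le T)))

variable [NormedAddCommGroup E] {f : ℝ → Ω → E} {u T : ℝ}

lemma measurable_lintegral_Ioc_enorm (hf : IsStronglyProgressive ℱ f) (u T : ℝ) :
    Measurable fun ω => ∫⁻ s in Ioc u T, ‖f s ω‖ₑ := by
  convert ((hf.stronglyMeasurable_uncurry_min T).enorm.comp
    measurable_swap).lintegral_prod_right' (ν := volume.restrict (Ioc u T)) using 1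
  funext ω
  exact setLIntegral_congr_fun measurableSet_Ioc fun s hs => by simp [min_eq_left hs.2]

lemma aestronglyMeasurable_restrict_Ioc (hf : IsStronglyProgressive ℱ f) (u T : ℝ) (ω : Ω) :
    AEStronglyMeasurable (fun s => f s ω) (volume.restrict (Ioc u T)) :=
  ((hf.stronglyMeasurable_uncurry_min T).comp_measurable
    (measurable_id.prodMk (measurable_const (a := ω)))).aestronglyMeasurable.congr <|
    ae_restrict_of_forall_mem measurableSet_Ioc fun s hs => by simp [min_eq_left hs.2]

lemma ae_intervalIntegrable {P : Measure Ω} (hf : IsStronglyProgressive ℱ f) (huT : u ≤ T)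
    (hfin : ∫⁻ ω, (∫⁻ s in Ioc u T, ‖f s ω‖ₑ) ∂P < ∞) :
    ∀ᵐ ω ∂P, IntervalIntegrable (fun s => f s ω) volume u T := by
  filter_upwards [ae_lt_top' (hf.measurable_lintegral_Ioc_enorm u T).aemeasurable hfin.ne]
    with ω hω
  exact (intervalIntegrable_iff_integrableOn_Ioc_of_le huT).2
    ⟨hf.aestronglyMeasurable_restrict_Ioc u T ω, hω⟩

variable [NormedSpace ℝ E] {P : Measure Ω} {τ : Ω → ℝ}

lemma aestronglyMeasurable_intervalIntegral (hf : IsStronglyProgressive ℱ f)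
    (hτ : Measurable τ) (hτT : ∀ᵐ ω ∂P, τ ω ∈ Icc u T) :
    AEStronglyMeasurable (fun ω => ∫ s in u..τ ω, f s ω) P := by
  set S : Set (Ω × ℝ) := {q | q.2 ∈ Ioc u (τ q.1)}
  have hS : MeasurableSet S :=
    (measurableSet_lt measurable_const measurable_snd).inter
      (measurableSet_le measurable_snd (hτ.comp measurable_fst))
  have hG := ((hf.stronglyMeasurable_uncurry_min T).comp_measurable measurable_swap).indicator hS
  refine (hG.integral_prod_right' (ν := volume)).aestronglyMeasurable.congr ?_
  filter_upwards [hτT] with ω hω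
  rw [intervalIntegral.integral_of_le hω.1, ← integral_indicator measurableSet_Ioc]
  refine integral_congr_ae (ae_of_all _ fun s => ?_)
  beta_reduce
  by_cases hs : s ∈ Ioc u (τ ω)
  · rw [indicator_of_mem hs, indicator_of_mem (show (ω, s) ∈ S from hs)]
    simp [min_eq_left (hs.2.trans hω.2)]
  · rw [indicator_of_notMem hs, indicator_of_notMem (show (ω, s) ∉ S from hs)]

lemma integrable_intervalIntegral (hf : IsStronglyProgressive ℱ f)
    (hfin : ∫⁻ ω, (∫⁻ s in Ioc u T, ‖f s ω‖ₑ) ∂P < ∞)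
    (hτ : Measurable τ) (hτT : ∀ᵐ ω ∂P, τ ω ∈ Icc u T) :
    Integrable (fun ω => ∫ s in u..τ ω, f s ω) P := by
  refine ⟨hf.aestronglyMeasurable_intervalIntegral hτ hτT, (lintegral_mono_ae ?_).trans_lt hfin⟩
  filter_upwards [hτT] with ω hω
  rw [intervalIntegral.integral_of_le hω.1]
  exact (enorm_integral_le_lintegral_enorm _).trans
    (lintegral_mono_set (Ioc_subset_Ioc_right hω.2))

end MeasureTheory.IsStronglyProgressive

lemma MeasureTheory.IsStoppingTime.measurable_of_coe {Ω : Type*} {m0 : MeasurableSpace Ω}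
    {ℱ : Filtration ℝ m0} {τ : Ω → ℝ} (hτ : IsStoppingTime ℱ fun ω => (τ ω : WithTop ℝ)) :
    Measurable τ :=
  measurable_of_Iic fun t => by
    have hpre : τ ⁻¹' Iic t = {ω | (τ ω : WithTop ℝ) ≤ t} := by ext; simp
    exact hpre ▸ ℱ.le t _ (hτ t)

lemma MeasureTheory.Integrable.ite_zero {Ω E : Type*} {m0 : MeasurableSpace Ω}
    [NormedAddCommGroup E] {P : Measure Ω} {g : Ω → E} (hg : Integrable g P) {p : Ω → Prop}
    [DecidablePred p] (hp : MeasurableSet {ω | p ω}) :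
    Integrable (fun ω => if p ω then g ω else 0) P :=
  (hg.indicator hp).congr (.of_forall fun ω => by simp [indicator_apply])

section Rewards

variable {Ω : Type*} {m0 : MeasurableSpace Ω} {P : Measure Ω}

lemma integrable_apply_of_continuousOn {T : ℝ} (hT : 0 ≤ T) {L : ℝ → Ω → ℝ}
    (hL : ∀ t, StronglyMeasurable (L t)) (hLc : ∀ ω, ContinuousOn (fun v => L v ω) (Icc 0 T))
    (hLint : ∫⁻ ω, (⨆ v ∈ Icc (0 : ℝ) T, ENNReal.ofReal |L v ω|) ∂P < ∞)
    {τ : Ω → ℝ} (hτ : Measurable τ) (hτT : ∀ᵐ ω ∂P, τ ω ∈ Icc 0 T) :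
    Integrable (fun ω => L (τ ω) ω) P := by
  have hclamp : Continuous fun t : ℝ => max (min t T) 0 :=
    (continuous_id.min continuous_const).max continuous_const
  have hL' : StronglyMeasurable fun p : ℝ × Ω => L (max (min p.1 T) 0) p.2 :=
    stronglyMeasurable_uncurry_of_continuous_of_stronglyMeasurable
      (fun ω => (hLc ω).comp_continuous hclamp
        fun t => ⟨le_max_right _ _, max_le (min_le_right _ _) hT⟩)
      fun t => hL _
  refine ⟨(hL'.comp_measurable (hτ.prodMk measurable_id)).aestronglyMeasurable.congr ?_,
    (lintegral_mono_ae ?_).trans_lt hLint⟩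
  · filter_upwards [hτT] with ω hω
    simp [min_eq_left hω.2, max_eq_left hω.1]
  · filter_upwards [hτT] with ω hω
    rw [Real.enorm_eq_ofReal_abs]
    exact le_biSup (fun v => ENNReal.ofReal |L v ω|) hω

lemma integrable_reward {ℱ : Filtration ℝ m0} {u T : ℝ} (hu : u ∈ Icc 0 T)
    {f : ℝ → Ω → ℝ} (hf : IsStronglyProgressive ℱ f)
    (hfin : ∫⁻ ω, (∫⁻ s in Ioc u T, ‖f s ω‖ₑ) ∂P < ∞)
    {L : ℝ → Ω → ℝ} (hL : ∀ t, StronglyMeasurable (L t))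
    (hLc : ∀ ω, ContinuousOn (fun v => L v ω) (Icc 0 T))
    (hLint : ∫⁻ ω, (⨆ v ∈ Icc (0 : ℝ) T, ENNReal.ofReal |L v ω|) ∂P < ∞)
    {ξ : Ω → ℝ} (hξ : Integrable ξ P) {τ : Ω → ℝ} (hτ : Measurable τ)
    (hτT : ∀ᵐ ω ∂P, τ ω ∈ Icc u T) : Integrable (reward f L ξ u T τ) P := by
  have hτ0 : ∀ᵐ ω ∂P, τ ω ∈ Icc 0 T := hτT.mono fun ω h => ⟨hu.1.trans h.1, h.2⟩
  have hobstacle := (integrable_apply_of_continuousOn (hu.1.trans hu.2) hL hLc hLint hτ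
    hτ0).ite_zero (p := fun ω => τ ω < T) (measurableSet_lt hτ measurable_const)
  have hterminal := hξ.ite_zero (p := fun ω => τ ω = T) (hτ (measurableSet_singleton T))
  exact ((hf.integrable_intervalIntegral hfin hτ hτT).add hobstacle).add hterminal

lemma lintegral_lintegral_Ioc_enorm_lt_top {u T : ℝ} {g g' h : ℝ → Ω → ℝ}
    (hfin : ∫⁻ ω, (∫⁻ s in Icc u T, ENNReal.ofReal (|g s ω| + |g' s ω|)) ∂P < ∞)
    (hh : ∀ s ω, |h s ω| ≤ |g s ω| + |g' s ω|) :
    ∫⁻ ω, (∫⁻ s in Ioc u T, ‖h s ω‖ₑ) ∂P < ∞ := by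
  refine (lintegral_mono fun ω => (lintegral_mono_set Ioc_subset_Icc_self).trans
    (lintegral_mono fun s => ?_)).trans_lt hfin
  rw [Real.enorm_eq_ofReal_abs]
  exact ENNReal.ofReal_le_ofReal (hh s ω)

lemma integrable_integral_abs_sub_add_abs_sub {ℱ : Filtration ℝ m0} {u T : ℝ} (huT : u ≤ T)
    {f f' : ℝ → Ω → ℝ} (hf : IsStronglyProgressive ℱ f) (hf' : IsStronglyProgressive ℱ f')
    (hffint : ∫⁻ ω, (∫⁻ s in Icc u T, ENNReal.ofReal (|f s ω| + |f' s ω|)) ∂P < ∞)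
    {ξ ξ' : Ω → ℝ} (hξ : Integrable ξ P) (hξ' : Integrable ξ' P) :
    Integrable (fun ω => (∫ s in u..T, |f s ω - f' s ω|) + |ξ ω - ξ' ω|) P :=
  ((hf.sub hf').norm.integrable_intervalIntegral
    (lintegral_lintegral_Ioc_enorm_lt_top hffint fun _ _ => (abs_abs _).trans_le (abs_sub _ _))
    measurable_const (ae_of_all _ fun _ => ⟨huT, le_rfl⟩)).add (hξ.sub hξ').abs

end Rewards

lemma abs_intervalIntegral_sub_le {g g' : ℝ → ℝ} {a b c : ℝ} (hab : a ≤ b) (hbc : b ≤ c)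
    (hg : IntervalIntegrable g volume a c) (hg' : IntervalIntegrable g' volume a c) :
    |(∫ s in a..b, g s) - ∫ s in a..b, g' s| ≤ ∫ s in a..c, |g s - g' s| := by
  have hsub : uIcc a b ⊆ uIcc a c := by
    rw [uIcc_of_le hab, uIcc_of_le (hab.trans hbc)]
    exact Icc_subset_Icc_right hbc
  rw [← intervalIntegral.integral_sub (hg.mono_set hsub) (hg'.mono_set hsub)]
  calc |∫ s in a..b, g s - g' s| ≤ ∫ s in a..b, |g s - g' s| :=
        intervalIntegral.abs_integral_le_integral_abs hab
    _ ≤ ∫ s in a..c, |g s - g' s| :=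
        intervalIntegral.integral_mono_interval le_rfl hab hbc
          (ae_of_all _ fun s => abs_nonneg _) (hg.sub hg').abs

lemma abs_reward_sub_reward_le {Ω : Type*} {f f' L : ℝ → Ω → ℝ} {ξ ξ' : Ω → ℝ} {u T : ℝ}
    {τ : Ω → ℝ} {ω : Ω} (hf : IntervalIntegrable (fun s => f s ω) volume u T)
    (hf' : IntervalIntegrable (fun s => f' s ω) volume u T) (hτ : τ ω ∈ Icc u T) :
    |reward f L ξ u T τ ω - reward f' L ξ' u T τ ω| ≤
      (∫ s in u..T, |f s ω - f' s ω|) + |ξ ω - ξ' ω| := by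
  have hterminal : |(if τ ω = T then ξ ω else 0) - (if τ ω = T then ξ' ω else 0)| ≤
      |ξ ω - ξ' ω| := by
    split_ifs <;> simp
  calc |reward f L ξ u T τ ω - reward f' L ξ' u T τ ω|
      = |((∫ s in u..τ ω, f s ω) - ∫ s in u..τ ω, f' s ω) +
          ((if τ ω = T then ξ ω else 0) - (if τ ω = T then ξ' ω else 0))| := by
        simp only [reward]
        congr 1
        ring
    _ ≤ _ := (abs_add_le _ _).trans
        (add_le_add (abs_intervalIntegral_sub_le hτ.1 hτ.2 hf hf') hterminal)

namespace IsEssSupFamily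

variable {Ω ι : Type*} {m m0 : MeasurableSpace Ω} {P : Measure Ω}

lemma ae_le_add {X X' : ι → Ω → ℝ} {Y Y' G : Ω → ℝ} (hY : IsEssSupFamily P X Y)
    (hY' : IsEssSupFamily P X' Y') (hG : AEStronglyMeasurable G P)
    (hle : ∀ i, ∀ᵐ ω ∂P, X i ω ≤ X' i ω + G ω) : ∀ᵐ ω ∂P, Y ω ≤ Y' ω + G ω :=
  hY.2.2 _ (hY'.1.aestronglyMeasurable.add hG) fun i => by
    filter_upwards [hle i, hY'.2.1 i] with ω h h'
    linarith

lemma ae_le_add_condExp {A A' : ι → Ω → ℝ} {D Y Y' : Ω → ℝ}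
    (hY : IsEssSupFamily P (fun i => P[A i | m]) Y)
    (hY' : IsEssSupFamily P (fun i => P[A' i | m]) Y')
    (hA : ∀ i, Integrable (A i) P) (hA' : ∀ i, Integrable (A' i) P) (hD : Integrable D P)
    (hle : ∀ i, ∀ᵐ ω ∂P, A i ω ≤ A' i ω + D ω) : ∀ᵐ ω ∂P, Y ω ≤ Y' ω + P[D | m] ω :=
  hY.ae_le_add hY' integrable_condExp.aestronglyMeasurable fun i =>
    (condExp_mono (hA i) ((hA' i).add hD) (hle i)).trans (condExp_add (hA' i) hD m).le

end IsEssSupFamily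

theorem value_process_stability_general
    {Ω : Type*} {m0 : MeasurableSpace Ω} (P : Measure Ω)
    (ℱ : Filtration ℝ m0) (T : ℝ) (u : ℝ) (hu : u ∈ Icc 0 T)
    (f f' : ℝ → Ω → ℝ) (hf : ProgMeasurable ℱ f) (hf' : ProgMeasurable ℱ f')
    (hffint : ∫⁻ ω, (∫⁻ s in Icc u T, ENNReal.ofReal (|f s ω| + |f' s ω|)) ∂P < ⊤)
    (L : ℝ → Ω → ℝ) (hL : StronglyAdapted ℱ L)
    (hLc : ∀ ω, ContinuousOn (fun v => L v ω) (Icc 0 T))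
    (hLint : ∫⁻ ω, (⨆ v ∈ Icc (0 : ℝ) T, ENNReal.ofReal |L v ω|) ∂P < ⊤)
    (ξ ξ' : Ω → ℝ) (hξ : Integrable ξ P)
    (hξ' : Integrable ξ' P)
    (Y Y' : Ω → ℝ)
    (hY : IsEssSupFamily P
      (fun τ : StoppingTimesIn ℱ P u T => P[reward f L ξ u T ↑τ | ℱ u]) Y)
    (hY' : IsEssSupFamily P
      (fun τ : StoppingTimesIn ℱ P u T => P[reward f' L ξ' u T ↑τ | ℱ u]) Y') :
    ∀ᵐ ω ∂P, |Y ω - Y' ω| ≤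
      (P[fun ω' => (∫ s in u..T, |f s ω' - f' s ω'|) + |ξ ω' - ξ' ω'| | ℱ u]) ω := by
  have hLm (t : ℝ) : StronglyMeasurable (L t) := (hL t).mono (ℱ.le t)
  have hfin := lintegral_lintegral_Ioc_enorm_lt_top hffint fun s ω =>
    le_add_of_nonneg_right (abs_nonneg (f' s ω))
  have hfin' := lintegral_lintegral_Ioc_enorm_lt_top hffint fun s ω =>
    le_add_of_nonneg_left (abs_nonneg (f s ω))
  have hA (τ : StoppingTimesIn ℱ P u T) : Integrable (reward f L ξ u T τ) P :=
    integrable_reward hu hf hfin hLm hLc hLint hξ (IsStoppingTime.measurable_of_coe τ.2.1) τ.2.2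
  have hA' (τ : StoppingTimesIn ℱ P u T) : Integrable (reward f' L ξ' u T τ) P :=
    integrable_reward hu hf' hfin' hLm hLc hLint hξ' (IsStoppingTime.measurable_of_coe τ.2.1) τ.2.2
  have hD := integrable_integral_abs_sub_add_abs_sub hu.2 hf hf' hffint hξ hξ'
  have hgap (τ : StoppingTimesIn ℱ P u T) : ∀ᵐ ω ∂P,
      |reward f L ξ u T τ ω - reward f' L ξ' u T τ ω| ≤
        (∫ s in u..T, |f s ω - f' s ω|) + |ξ ω - ξ' ω| := by
    filter_upwards [hf.ae_intervalIntegrable hu.2 hfin, hf'.ae_intervalIntegrable hu.2 hfin',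
      τ.2.2] with ω hω hω' hτ
    exact abs_reward_sub_reward_le hω hω' hτ
  have hle := hY.ae_le_add_condExp hY' hA hA' hD fun τ =>
    (hgap τ).mono fun ω h => by linarith [(abs_sub_le_iff.1 h).1]
  have hge := hY'.ae_le_add_condExp hY hA' hA hD fun τ =>
    (hgap τ).mono fun ω h => by linarith [(abs_sub_le_iff.1 h).2]
  filter_upwards [hle, hge] with ω h h'
  exact abs_sub_le_iff.2 ⟨by linarith, by linarith⟩

/-- Stability of the value process (essential supremum of the
conditional stopped rewards) with respect to the data `(f, ξ)`:
`|Y - Y'| ≤ E[∫ᵤᵀ |f - f'| ds + |ξ - ξ'| | 𝓕ᵤ]` a.s. -/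
theorem value_process_stability
    {Ω : Type*} {m0 : MeasurableSpace Ω} (P : Measure Ω) [IsProbabilityMeasure P]
    (ℱ : Filtration ℝ m0) (T : ℝ) (hT : 0 < T) (u : ℝ) (hu : u ∈ Icc 0 T)
    (f f' : ℝ → Ω → ℝ) (hf : ProgMeasurable ℱ f) (hf' : ProgMeasurable ℱ f')
    (hffint : ∫⁻ ω, (∫⁻ s in Icc u T, ENNReal.ofReal (|f s ω| + |f' s ω|)) ∂P < ⊤)
    (L : ℝ → Ω → ℝ) (hL : StronglyAdapted ℱ L)
    (hLc : ∀ ω, ContinuousOn (fun v => L v ω) (Icc 0 T))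
    (hLint : ∫⁻ ω, (⨆ v ∈ Icc (0 : ℝ) T, ENNReal.ofReal |L v ω|) ∂P < ⊤)
    (ξ ξ' : Ω → ℝ) (hξ : Integrable ξ P) (hξm : Measurable[ℱ T] ξ)
    (hξ' : Integrable ξ' P) (hξ'm : Measurable[ℱ T] ξ')
    (Y Y' : Ω → ℝ)
    (hY : IsEssSupFamily P
      (fun τ : StoppingTimesIn ℱ P u T => P[reward f L ξ u T ↑τ | ℱ u]) Y)
    (hY' : IsEssSupFamily P
      (fun τ : StoppingTimesIn ℱ P u T => P[reward f' L ξ' u T ↑τ | ℱ u]) Y') :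
    ∀ᵐ ω ∂P, |Y ω - Y' ω| ≤
      (P[fun ω' => (∫ s in u..T, |f s ω' - f' s ω'|) + |ξ ω' - ξ' ω'| | ℱ u]) ω :=
  value_process_stability_general P ℱ T u hu f f' hf hf' hffint L hL hLc hLint ξ ξ' hξ hξ' Y Y' hY
    hY'
end

section
/- Let T > 0, let k, k' : [0,T] → ℝ be continuous and nondecreasing with k(0) = k'(0) = 0, with Lebesgue–Stieltjes measures μ_k and μ_{k'}. Let y, y', l : [0,T] → ℝ be continuous functions with y(u) ≥ l(u) and y'(u) ≥ l(u) for all u ∈ [0,T], and suppose ∫_{[0,T]} (y − l) dμ_k = 0 and ∫_{[0,T]} (y' − l) dμ_{k'} = 0. Then ∫_{[0,T]} (y − y') dμ_k + ∫_{[0,T]} (y' − y) dμ_{k'} ≤ 0. -/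
open MeasureTheory Set
open scoped ENNReal

/-- The pathwise inequality `∫ (y - y') dμ_k + ∫ (y' - y) dμ_{k'} ≤ 0`
when each of `k`, `k'` increases only where its own solution (`y`, resp. `y'`)
touches the common obstacle `l`. -/
theorem stieltjes_cross_integral_nonpos
    (T : ℝ) (hT : 0 < T) (k k' y y' l : ℝ → ℝ)
    (hk_cont : ContinuousOn k (Icc 0 T)) (hk_mono : MonotoneOn k (Icc 0 T))
    (hk0 : k 0 = 0)
    (hk'_cont : ContinuousOn k' (Icc 0 T)) (hk'_mono : MonotoneOn k' (Icc 0 T))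
    (hk'0 : k' 0 = 0)
    (μ μ' : Measure ℝ)
    (hμ : ∀ a b : ℝ, 0 ≤ a → a ≤ b → b ≤ T → μ (Icc a b) = ENNReal.ofReal (k b - k a))
    (hμ' : ∀ a b : ℝ, 0 ≤ a → a ≤ b → b ≤ T → μ' (Icc a b) = ENNReal.ofReal (k' b - k' a))
    (hy : ContinuousOn y (Icc 0 T)) (hy' : ContinuousOn y' (Icc 0 T))
    (hl : ContinuousOn l (Icc 0 T))
    (hyl : ∀ u ∈ Icc (0 : ℝ) T, l u ≤ y u)
    (hy'l : ∀ u ∈ Icc (0 : ℝ) T, l u ≤ y' u)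
    (hflat : ∫⁻ u in Icc (0 : ℝ) T, ENNReal.ofReal (y u - l u) ∂μ = 0)
    (hflat' : ∫⁻ u in Icc (0 : ℝ) T, ENNReal.ofReal (y' u - l u) ∂μ' = 0) :
    (∫ u in Icc (0 : ℝ) T, (y u - y' u) ∂μ) +
      (∫ u in Icc (0 : ℝ) T, (y' u - y u) ∂μ') ≤ 0 := by
  have hmeas : MeasurableSet (Icc (0 : ℝ) T) := measurableSet_Icc
  have key : ∀ (ν : Measure ℝ) (f g : ℝ → ℝ),
      ContinuousOn f (Icc 0 T) → ContinuousOn g (Icc 0 T) →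
      (∀ u ∈ Icc (0 : ℝ) T, l u ≤ f u) → (∀ u ∈ Icc (0 : ℝ) T, l u ≤ g u) →
      (∫⁻ u in Icc (0 : ℝ) T, ENNReal.ofReal (f u - l u) ∂ν = 0) →
      (∫ u in Icc (0 : ℝ) T, (f u - g u) ∂ν) ≤ 0 := by
    intro ν f g hf hg hfl hgl hfl0
    have hm : AEMeasurable (fun u => ENNReal.ofReal (f u - l u)) (ν.restrict (Icc 0 T)) :=
      ENNReal.measurable_ofReal.comp_aemeasurable ((hf.sub hl).aemeasurable hmeas)
    have h0 := (lintegral_eq_zero_iff' hm).mp hfl0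
    have hFL : ∀ᵐ u ∂(ν.restrict (Icc 0 T)), f u = l u := by
      filter_upwards [h0, ae_restrict_mem hmeas] with u hu hu'
      have h1 : f u - l u ≤ 0 := by
        simpa [ENNReal.ofReal_eq_zero] using hu
      have h2 := hfl u hu'
      linarith
    have heq : (∫ u in Icc (0 : ℝ) T, (f u - g u) ∂ν)
        = ∫ u in Icc (0 : ℝ) T, (l u - g u) ∂ν := by
      refine integral_congr_ae ?_
      filter_upwards [hFL] with u hu
      rw [hu]
    rw [heq]
    refine integral_nonpos_of_ae ?_
    filter_upwards [ae_restrict_mem hmeas] with u hu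
    have := hgl u hu
    simpa using sub_nonpos.mpr this
  have h1 := key μ y y' hy hy' hyl hy'l hflat
  have h2 := key μ' y' y hy' hy hy'l hyl hflat'
  linarith
end

section
/- Let T > 0 and δ ∈ (0,T]. Let (Ω, 𝓕, P) be a probability space with a filtration (𝓕_s)_{s ∈ [0,T]}. Let f : [0,T] × [0,T] × ℝ × ℝ × Ω → ℝ be measurable, progressively measurable in (s,ω) for each fixed (t,y,z), and Lipschitz in (y,z) with constant c_f: |f(t,s,y,z,ω) − f(t,s,y',z',ω)| ≤ c_f(|y − y'| + |z − z'|). Let L be adapted with continuous paths and E[sup_v |L(v)|] < ∞, and let ξ(t) (t ∈ [0,T]) be integrable 𝓕_T-measurable random variables. Let U, U' : [0,T] × Ω → ℝ be progressively measurable and V, V' : [0,T]² × Ω → ℝ be jointly measurable with V(t,·), V'(t,·) progressively measurable for each t, such that all the reward variables below are integrable and E[∫_{T−δ}^T |U − U'|² ds] + E[∫_{T−δ}^T ∫ₜᵀ |V(t,s) − V'(t,s)|² ds dt] < ∞. For each t ∈ [T−δ, T], let Y(t) be an essential supremum of { E[ ∫ₜ^τ f(t,s,U(s),V(t,s)) ds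 + L(τ) 1_{τ<T} + ξ(t) 1_{τ=T} | 𝓕_t ] : τ ∈ S_t } and let Y'(t) be an essential supremum of the analogous family with (U', V') in place of (U, V); assume (t,ω) ↦ Y(t,ω) and (t,ω) ↦ Y'(t,ω) are jointly measurable. Then E[ ∫_{T−δ}^T |Y(t) − Y'(t)|² dt ] ≤ 4 c_f² (δ² + δ) ( E[∫_{T−δ}^T |U(s) − U'(s)|² ds] + E[∫_{T−δ}^T ∫ₜᵀ |V(t,s) − V'(t,s)|² ds dt] ). -/
/-!
Fix `t`. By the Lipschitz property, for every stopping time `τ ∈ S_t` the two rewards differ by at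
most `D = ∫ₜᵀ c_f (|U - U'| + |V(t,·) - V'(t,·)|) ds`, uniformly in `τ`. Minimality of the
essential supremum turns this into `|Y(t) - Y'(t)| ≤ E[D | 𝓕_t]`, and the `L²`-contraction of
conditional expectation together with Cauchy–Schwarz in `s` gives
`E|Y(t) - Y'(t)|² ≤ 2 c_f² (T - t) E ∫ₜᵀ (|U - U'|² + |V(t,·) - V'(t,·)|²) ds`.
Integrating over `t ∈ [T - δ, T]` (Tonelli) yields `2 c_f² δ (δ A + B)`, where `A` and `B` are the
two terms of the right-hand side.
-/

open MeasureTheory Set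
open scoped ENNReal

section SquareIntegrals

variable {α : Type*} {m m0 : MeasurableSpace α} {μ : Measure α}

lemma lintegral_ofReal_sq_eq_eLpNorm_sq (h : α → ℝ) :
    ∫⁻ a, ENNReal.ofReal (h a ^ 2) ∂μ = eLpNorm h 2 μ ^ 2 := by
  rw [eLpNorm_eq_lintegral_rpow_enorm_toReal two_ne_zero ENNReal.ofNat_ne_top,
    ← ENNReal.rpow_natCast, ← ENNReal.rpow_mul]
  norm_num
  refine lintegral_congr fun a => ?_
  rw [← sq_abs, ENNReal.ofReal_pow (abs_nonneg _), ← Real.enorm_eq_ofReal_abs]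

lemma lintegral_ofReal_sq_condExp_le (h : α → ℝ) :
    ∫⁻ a, ENNReal.ofReal ((μ[h | m]) a ^ 2) ∂μ ≤ ∫⁻ a, ENNReal.ofReal (h a ^ 2) ∂μ := by
  simp only [lintegral_ofReal_sq_eq_eLpNorm_sq]
  gcongr
  exact eLpNorm_condExp_le_eLpNorm h one_le_two

lemma sq_lintegral_enorm_le {h : α → ℝ} (hm : AEStronglyMeasurable h μ) :
    (∫⁻ a, ‖h a‖ₑ ∂μ) ^ 2 ≤ μ univ * ∫⁻ a, ENNReal.ofReal (h a ^ 2) ∂μ := by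
  have h12 := eLpNorm_le_eLpNorm_mul_rpow_measure_univ (p := 1) (q := 2) one_le_two hm
  rw [eLpNorm_one_eq_lintegral_enorm] at h12
  calc (∫⁻ a, ‖h a‖ₑ ∂μ) ^ 2
      ≤ (eLpNorm h 2 μ * μ univ ^ (1 / (1 : ℝ≥0∞).toReal - 1 / (2 : ℝ≥0∞).toReal)) ^ 2 := by
        gcongr
    _ = μ univ * ∫⁻ a, ENNReal.ofReal (h a ^ 2) ∂μ := by
        rw [lintegral_ofReal_sq_eq_eLpNorm_sq, mul_pow, mul_comm, ← ENNReal.rpow_natCast,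
          ← ENNReal.rpow_mul]
        norm_num

lemma ofReal_sq_integral_le (h : α → ℝ) :
    ENNReal.ofReal ((∫ a, h a ∂μ) ^ 2) ≤ μ univ * ∫⁻ a, ENNReal.ofReal (h a ^ 2) ∂μ := by
  by_cases hi : Integrable h μ
  swap
  · simp [integral_undef hi]
  calc ENNReal.ofReal ((∫ a, h a ∂μ) ^ 2) = ‖∫ a, h a ∂μ‖ₑ ^ 2 := by
        rw [← sq_abs, ENNReal.ofReal_pow (abs_nonneg _), Real.enorm_eq_ofReal_abs]
    _ ≤ (∫⁻ a, ‖h a‖ₑ ∂μ) ^ 2 := by gcongr; exact enorm_integral_le_lintegral_enorm h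
    _ ≤ μ univ * ∫⁻ a, ENNReal.ofReal (h a ^ 2) ∂μ := sq_lintegral_enorm_le hi.1

lemma integrable_of_mul_lintegral_ofReal_sq_lt_top {h : α → ℝ} (hm : AEStronglyMeasurable h μ)
    (hfin : μ univ * ∫⁻ a, ENNReal.ofReal (h a ^ 2) ∂μ < ⊤) : Integrable h μ :=
  ⟨hm, (ENNReal.pow_lt_top_iff.1 ((sq_lintegral_enorm_le hm).trans_lt hfin)).resolve_right
    two_ne_zero⟩

end SquareIntegrals

lemma abs_intervalIntegral_sub_le_setIntegral {φ φ' ψ : ℝ → ℝ} {u a T : ℝ}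
    (hua : u ≤ a) (haT : a ≤ T) (hφ : Measurable φ) (hφ' : Measurable φ')
    (hψ : IntegrableOn ψ (Icc u T)) (hle : ∀ s ∈ Icc u T, |φ s - φ' s| ≤ ψ s) :
    |(∫ s in u..a, φ s) - ∫ s in u..a, φ' s| ≤ ∫ s in Icc u T, ψ s := by
  have hψ_nonneg : 0 ≤ᵐ[volume.restrict (Icc u T)] ψ :=
    (ae_restrict_mem measurableSet_Icc).mono fun s hs => (abs_nonneg _).trans (hle s hs)
  have hsub : Icc u a ⊆ Icc u T := Icc_subset_Icc le_rfl haT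
  have hd : IntervalIntegrable (φ - φ') volume u a := by
    rw [intervalIntegrable_iff_integrableOn_Icc_of_le hua]
    refine (hψ.mono_set hsub).mono' (hφ.sub hφ').aestronglyMeasurable ?_
    exact (ae_restrict_mem measurableSet_Icc).mono fun s hs => hle s (hsub hs)
  by_cases hφi : IntervalIntegrable φ volume u a
  swap
  · have hφ'i : ¬ IntervalIntegrable φ' volume u a := fun h =>
      hφi (by simpa using h.add hd)
    simpa [intervalIntegral.integral_undef hφi, intervalIntegral.integral_undef hφ'i]
      using integral_nonneg_of_ae hψ_nonneg
  have hφ'i : IntervalIntegrable φ' volume u a := by simpa using hφi.sub hd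
  rw [← intervalIntegral.integral_sub hφi hφ'i, intervalIntegral.integral_of_le hua]
  calc |∫ s in Ioc u a, φ s - φ' s| ≤ ∫ s in Ioc u a, ψ s :=
        norm_integral_le_of_norm_le (f := fun s => φ s - φ' s)
          (hψ.mono_set (Ioc_subset_Icc_self.trans hsub)) <|
          (ae_restrict_mem measurableSet_Ioc).mono fun s hs =>
            hle s (hsub (Ioc_subset_Icc_self hs))
    _ ≤ ∫ s in Icc u T, ψ s :=
        setIntegral_mono_set hψ hψ_nonneg (Ioc_subset_Icc_self.trans hsub).eventuallyLE

lemma reward_sub_reward {Ω : Type*} (φ φ' L : ℝ → Ω → ℝ) (ξ : Ω → ℝ) (u T : ℝ)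
    (τ : Ω → ℝ) (ω : Ω) :
    reward φ L ξ u T τ ω - reward φ' L ξ u T τ ω =
      (∫ s in u..τ ω, φ s ω) - ∫ s in u..τ ω, φ' s ω := by
  simp only [reward]
  ring

section EssSup

variable {Ω ι : Type*} {m m0 : MeasurableSpace Ω} {P : Measure Ω}
  {R R' : ι → Ω → ℝ} {D Y Y' : Ω → ℝ}

lemma IsEssSupFamily.ae_le_add_condExp_s14
    (hY : IsEssSupFamily P (fun i => P[R i | m]) Y)
    (hY' : IsEssSupFamily P (fun i => P[R' i | m]) Y')
    (hR : ∀ i, Integrable (R i) P) (hR' : ∀ i, Integrable (R' i) P) (hD : Integrable D P)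
    (hRD : ∀ i, R i ≤ᵐ[P] R' i + D) : Y ≤ᵐ[P] Y' + P[D | m] := by
  refine hY.2.2 _ (hY'.1.add integrable_condExp).aestronglyMeasurable fun i => ?_
  filter_upwards [condExp_mono (m := m) (hR i) ((hR' i).add hD) (hRD i),
    condExp_add (hR' i) hD m, hY'.2.1 i] with ω hmono hadd hle
  rw [hadd] at hmono
  simp only [Pi.add_apply] at hmono ⊢
  linarith

lemma IsEssSupFamily.lintegral_ofReal_sq_sub_le
    (hY : IsEssSupFamily P (fun i => P[R i | m]) Y)
    (hY' : IsEssSupFamily P (fun i => P[R' i | m]) Y')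
    (hR : ∀ i, Integrable (R i) P) (hR' : ∀ i, Integrable (R' i) P) (hD : Integrable D P)
    (hRD : ∀ i, ∀ᵐ ω ∂P, |R i ω - R' i ω| ≤ D ω) :
    ∫⁻ ω, ENNReal.ofReal ((Y ω - Y' ω) ^ 2) ∂P ≤ ∫⁻ ω, ENNReal.ofReal (D ω ^ 2) ∂P := by
  have hle := hY.ae_le_add_condExp_s14 hY' hR hR' hD fun i =>
    (hRD i).mono fun ω h => by simp only [Pi.add_apply]; linarith [(abs_le.1 h).2]
  have hge := hY'.ae_le_add_condExp_s14 hY hR' hR hD fun i =>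
    (hRD i).mono fun ω h => by simp only [Pi.add_apply]; linarith [(abs_le.1 h).1]
  calc ∫⁻ ω, ENNReal.ofReal ((Y ω - Y' ω) ^ 2) ∂P
      ≤ ∫⁻ ω, ENNReal.ofReal ((P[D | m]) ω ^ 2) ∂P := by
        refine lintegral_mono_ae ?_
        filter_upwards [hle, hge] with ω h₁ h₂
        simp only [Pi.add_apply] at h₁ h₂
        exact ENNReal.ofReal_le_ofReal (sq_le_sq' (by linarith) (by linarith))
    _ ≤ ∫⁻ ω, ENNReal.ofReal (D ω ^ 2) ∂P := lintegral_ofReal_sq_condExp_le D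

end EssSup

lemma IsStronglyProgressive.measurable_uncurry {Ω : Type*} {m0 : MeasurableSpace Ω}
    {ℱ : Filtration ℝ m0} {u : ℝ → Ω → ℝ} (hu : IsStronglyProgressive ℱ u) :
    Measurable (Function.uncurry u) := by
  intro s hs
  let e : ∀ n : ℕ, Iic (n : ℝ) × Ω → ℝ × Ω := fun n p => (p.1, p.2)
  have he : ∀ n, MeasurableEmbedding (e n) := fun n =>
    (MeasurableEmbedding.subtype_coe measurableSet_Iic).prodMap MeasurableEmbedding.id
  have hpre : ∀ n, MeasurableSet (e n ⁻¹' (Function.uncurry u ⁻¹' s)) := fun n =>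
    ((hu n).measurable.mono (sup_le_sup (MeasurableSpace.comap_mono le_rfl)
      (MeasurableSpace.comap_mono (ℱ.le n))) le_rfl) hs
  convert MeasurableSet.iUnion fun n => (he n).measurableSet_image.2 (hpre n)
  ext ⟨t, ω⟩
  simp only [mem_iUnion, mem_image, mem_preimage]
  refine ⟨fun h => ?_, fun ⟨n, p, hp, hpe⟩ => hpe ▸ hp⟩
  obtain ⟨n, hn⟩ := exists_nat_ge t
  exact ⟨n, (⟨t, hn⟩, ω), h, rfl⟩

lemma lintegral_ofReal_sq_sub_le_of_isEssSupFamily_reward {Ω : Type*} {m0 : MeasurableSpace Ω}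
    {P : Measure Ω} [IsFiniteMeasure P] {ℱ : Filtration ℝ m0} {u T : ℝ}
    {φ φ' ψ L : ℝ → Ω → ℝ} {ξ Y Y' : Ω → ℝ}
    (hφ : Measurable (Function.uncurry φ)) (hφ' : Measurable (Function.uncurry φ'))
    (hψ : Measurable (Function.uncurry ψ))
    (hle : ∀ s ∈ Icc u T, ∀ ω, |φ s ω - φ' s ω| ≤ ψ s ω)
    (hint : ∀ τ ∈ StoppingTimesIn ℱ P u T,
      Integrable (reward φ L ξ u T τ) P ∧ Integrable (reward φ' L ξ u T τ) P)
    (hY : IsEssSupFamily P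
      (fun τ : StoppingTimesIn ℱ P u T => P[reward φ L ξ u T ↑τ | ℱ u]) Y)
    (hY' : IsEssSupFamily P
      (fun τ : StoppingTimesIn ℱ P u T => P[reward φ' L ξ u T ↑τ | ℱ u]) Y') :
    ∫⁻ ω, ENNReal.ofReal ((Y ω - Y' ω) ^ 2) ∂P ≤
      ENNReal.ofReal (T - u) * ∫⁻ ω, (∫⁻ s in Icc u T, ENNReal.ofReal (ψ s ω ^ 2)) ∂P := by
  set G : Ω → ℝ≥0∞ := fun ω => ∫⁻ s in Icc u T, ENNReal.ofReal (ψ s ω ^ 2)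
  set D : Ω → ℝ := fun ω => ∫ s in Icc u T, ψ s ω
  have hvol : (volume.restrict (Icc u T)) univ = ENNReal.ofReal (T - u) := by simp
  rcases eq_top_or_lt_top (ENNReal.ofReal (T - u) * ∫⁻ ω, G ω ∂P) with htop | hfin
  · rw [htop]; exact le_top
  rw [← lintegral_const_mul' _ _ ENNReal.ofReal_ne_top] at hfin ⊢
  have hG : Measurable G := (hψ.comp measurable_swap).pow_const 2 |>.ennreal_ofReal
    |>.lintegral_prod_right'
  have hψ_int : ∀ᵐ ω ∂P, IntegrableOn (ψ · ω) (Icc u T) := by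
    filter_upwards [ae_lt_top (hG.const_mul _) hfin.ne] with ω hω
    refine integrable_of_mul_lintegral_ofReal_sq_lt_top ?_ (by rwa [hvol])
    exact (hψ.comp measurable_prodMk_right).aestronglyMeasurable
  have hD_sq : ∀ ω, ENNReal.ofReal (D ω ^ 2) ≤ ENNReal.ofReal (T - u) * G ω := fun ω => by
    simpa only [hvol] using ofReal_sq_integral_le (μ := volume.restrict (Icc u T)) (ψ · ω)
  have hD_int : Integrable D P := by
    refine integrable_of_mul_lintegral_ofReal_sq_lt_top ?_ ?_
    · exact (hψ.comp measurable_swap).stronglyMeasurable.integral_prod_right'.aestronglyMeasurable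
    · exact ENNReal.mul_lt_top (measure_lt_top P univ)
        ((lintegral_mono hD_sq).trans_lt hfin)
  have hreward : ∀ τ : StoppingTimesIn ℱ P u T, ∀ᵐ ω ∂P,
      |reward φ L ξ u T τ ω - reward φ' L ξ u T τ ω| ≤ D ω := fun τ => by
    filter_upwards [τ.2.2, hψ_int] with ω hτ hω
    rw [reward_sub_reward]
    exact abs_intervalIntegral_sub_le_setIntegral hτ.1 hτ.2
      (hφ.comp measurable_prodMk_right) (hφ'.comp measurable_prodMk_right) hω
      fun s hs => hle s hs ω
  exact (hY.lintegral_ofReal_sq_sub_le hY' (fun τ => (hint τ τ.2).1) (fun τ => (hint τ τ.2).2)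
    hD_int hreward).trans (lintegral_mono hD_sq)

lemma ofReal_sq_mul_abs_add_abs_le (c x y : ℝ) :
    ENNReal.ofReal ((c * (|x| + |y|)) ^ 2) ≤
      ENNReal.ofReal (2 * c ^ 2) * (ENNReal.ofReal (x ^ 2) + ENNReal.ofReal (y ^ 2)) := by
  rw [← ENNReal.ofReal_add (sq_nonneg _) (sq_nonneg _), ← ENNReal.ofReal_mul (by positivity)]
  refine ENNReal.ofReal_le_ofReal ?_
  nlinarith [sq_nonneg (|x| - |y|), sq_abs x, sq_abs y, sq_nonneg c,
    mul_nonneg (sq_nonneg c) (sq_nonneg (|x| - |y|))]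

lemma measurable_setLIntegral_Icc_left {Ω : Type*} [MeasurableSpace Ω]
    {g : ℝ × ℝ × Ω → ℝ≥0∞} (hg : Measurable g) (T : ℝ) :
    Measurable fun q : ℝ × Ω => ∫⁻ s in Icc q.1 T, g (q.1, s, q.2) := by
  have hS : MeasurableSet {p : (ℝ × Ω) × ℝ | p.1.1 ≤ p.2 ∧ p.2 ≤ T} :=
    (measurableSet_le measurable_fst.fst measurable_snd).inter
      (measurableSet_le measurable_snd measurable_const)
  have hg' : Measurable fun p : (ℝ × Ω) × ℝ => g (p.1.1, p.2, p.1.2) :=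
    hg.comp (measurable_fst.fst.prodMk (measurable_snd.prodMk measurable_fst.snd))
  convert (hg'.indicator hS).lintegral_prod_right' (ν := volume) using 1
  funext q
  rw [← lintegral_indicator measurableSet_Icc]
  rfl

lemma lintegral_ofReal_sq_sub_le_of_lipschitz {Ω : Type*} {m0 : MeasurableSpace Ω}
    {P : Measure Ω} [IsFiniteMeasure P] {ℱ : Filtration ℝ m0} {u T c : ℝ}
    {g : ℝ → ℝ → ℝ → Ω → ℝ}
    (hg : Measurable fun p : ℝ × ℝ × ℝ × Ω => g p.1 p.2.1 p.2.2.1 p.2.2.2)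
    (hLip : ∀ s y y' z z' ω, |g s y z ω - g s y' z' ω| ≤ c * (|y - y'| + |z - z'|))
    {U U' W W' L : ℝ → Ω → ℝ} {ξ Y Y' : Ω → ℝ}
    (hU : Measurable (Function.uncurry U)) (hU' : Measurable (Function.uncurry U'))
    (hW : Measurable (Function.uncurry W)) (hW' : Measurable (Function.uncurry W'))
    (hint : ∀ τ ∈ StoppingTimesIn ℱ P u T,
      Integrable (reward (fun s ω => g s (U s ω) (W s ω) ω) L ξ u T τ) P ∧
      Integrable (reward (fun s ω => g s (U' s ω) (W' s ω) ω) L ξ u T τ) P)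
    (hY : IsEssSupFamily P (fun τ : StoppingTimesIn ℱ P u T =>
      P[reward (fun s ω => g s (U s ω) (W s ω) ω) L ξ u T ↑τ | ℱ u]) Y)
    (hY' : IsEssSupFamily P (fun τ : StoppingTimesIn ℱ P u T =>
      P[reward (fun s ω => g s (U' s ω) (W' s ω) ω) L ξ u T ↑τ | ℱ u]) Y') :
    ∫⁻ ω, ENNReal.ofReal ((Y ω - Y' ω) ^ 2) ∂P ≤
      ENNReal.ofReal (2 * c ^ 2 * (T - u)) *
        ∫⁻ ω, ((∫⁻ s in Icc u T, ENNReal.ofReal ((U s ω - U' s ω) ^ 2)) +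
          ∫⁻ s in Icc u T, ENNReal.ofReal ((W s ω - W' s ω) ^ 2)) ∂P := by
  have hφ : ∀ {V Z : ℝ → Ω → ℝ}, Measurable (Function.uncurry V) →
      Measurable (Function.uncurry Z) →
      Measurable (Function.uncurry fun s ω => g s (V s ω) (Z s ω) ω) := fun hV hZ =>
    hg.comp (measurable_fst.prodMk (hV.prodMk (hZ.prodMk measurable_snd)))
  have hΔU : ∀ ω, Measurable fun s => ENNReal.ofReal ((U s ω - U' s ω) ^ 2) := fun ω =>
    (((hU.comp measurable_prodMk_right).sub (hU'.comp measurable_prodMk_right)).pow_const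
      2).ennreal_ofReal
  refine (lintegral_ofReal_sq_sub_le_of_isEssSupFamily_reward (ψ := fun s ω =>
    c * (|U s ω - U' s ω| + |W s ω - W' s ω|)) (hφ hU hW) (hφ hU' hW')
    (measurable_const.mul ((hU.sub hU').abs.add (hW.sub hW').abs))
    (fun s _ ω => hLip s _ _ _ _ ω) hint hY hY').trans ?_
  rw [ENNReal.ofReal_mul (by positivity : (0 : ℝ) ≤ 2 * c ^ 2),
    mul_comm (ENNReal.ofReal (2 * c ^ 2)), mul_assoc]
  refine mul_le_mul_right ?_ _
  rw [← lintegral_const_mul' _ _ ENNReal.ofReal_ne_top]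
  gcongr with ω
  rw [← lintegral_add_left (hΔU ω),
    ← lintegral_const_mul' _ _ ENNReal.ofReal_ne_top]
  exact lintegral_mono fun s => ofReal_sq_mul_abs_add_abs_le _ _ _

lemma lintegral_setLIntegral_Icc_le_of_forall_le {Ω : Type*} [MeasurableSpace Ω]
    {P : Measure Ω} [SFinite P] {F : ℝ → Ω → ℝ≥0∞} {a : Ω → ℝ≥0∞} {b : ℝ × Ω → ℝ≥0∞}
    (hF : Measurable (Function.uncurry F)) (ha : Measurable a) (hb : Measurable b)
    {x y : ℝ} {K : ℝ≥0∞} (hK : K ≠ ⊤)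
    (hslice : ∀ t ∈ Icc x y, ∫⁻ ω, F t ω ∂P ≤ K * ∫⁻ ω, (a ω + b (t, ω)) ∂P) :
    ∫⁻ ω, (∫⁻ t in Icc x y, F t ω) ∂P ≤
      K * (ENNReal.ofReal (y - x) * ∫⁻ ω, a ω ∂P + ∫⁻ ω, (∫⁻ t in Icc x y, b (t, ω)) ∂P) :=
  calc ∫⁻ ω, (∫⁻ t in Icc x y, F t ω) ∂P = ∫⁻ t in Icc x y, ∫⁻ ω, F t ω ∂P :=
        lintegral_lintegral_swap (hF.comp measurable_swap).aemeasurable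
    _ ≤ ∫⁻ t in Icc x y, K * ∫⁻ ω, (a ω + b (t, ω)) ∂P :=
        setLIntegral_mono' measurableSet_Icc hslice
    _ = K * ∫⁻ ω, (ENNReal.ofReal (y - x) * a ω + ∫⁻ t in Icc x y, b (t, ω)) ∂P := by
        rw [lintegral_const_mul' _ _ hK,
          lintegral_lintegral_swap ((ha.comp measurable_snd).add hb).aemeasurable]
        congr 1
        refine lintegral_congr fun ω => ?_
        rw [lintegral_add_left measurable_const, setLIntegral_const, Real.volume_Icc, mul_comm]
    _ = K * (ENNReal.ofReal (y - x) * ∫⁻ ω, a ω ∂P + ∫⁻ ω, (∫⁻ t in Icc x y, b (t, ω)) ∂P) := by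
        rw [lintegral_add_left (ha.const_mul _), lintegral_const_mul _ ha]

lemma ofReal_two_mul_sq_mul_le {c δ : ℝ} (hδ : 0 ≤ δ) (A B : ℝ≥0∞) :
    ENNReal.ofReal (2 * c ^ 2 * δ) * (ENNReal.ofReal δ * A + B) ≤
      ENNReal.ofReal (4 * c ^ 2 * (δ ^ 2 + δ)) * (A + B) := by
  rw [mul_add, ← mul_assoc, mul_add, ← ENNReal.ofReal_mul (by positivity)]
  have hc := mul_nonneg (sq_nonneg c) hδ
  exact add_le_add (mul_le_mul_left (ENNReal.ofReal_le_ofReal (by nlinarith)) _)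
    (mul_le_mul_left (ENNReal.ofReal_le_ofReal (by nlinarith)) _)

theorem value_process_contraction_estimate_general
    {Ω : Type*} {m0 : MeasurableSpace Ω} (P : Measure Ω) [IsProbabilityMeasure P]
    (ℱ : Filtration ℝ m0) (T δ c_f : ℝ) (hδ : 0 < δ)
    (f : ℝ → ℝ → ℝ → ℝ → Ω → ℝ)
    (hf_meas : Measurable fun p : ℝ × ℝ × ℝ × ℝ × Ω =>
      f p.1 p.2.1 p.2.2.1 p.2.2.2.1 p.2.2.2.2)
    (hLip : ∀ (t s y y' z z' : ℝ) (ω : Ω),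
      |f t s y z ω - f t s y' z' ω| ≤ c_f * (|y - y'| + |z - z'|))
    (L : ℝ → Ω → ℝ) (ξ : ℝ → Ω → ℝ)
    (U U' : ℝ → Ω → ℝ) (hU : ProgMeasurable ℱ U) (hU' : ProgMeasurable ℱ U')
    (V V' : ℝ → ℝ → Ω → ℝ)
    (hV : Measurable fun p : ℝ × ℝ × Ω => V p.1 p.2.1 p.2.2)
    (hV' : Measurable fun p : ℝ × ℝ × Ω => V' p.1 p.2.1 p.2.2)
    (hreward_int : ∀ t ∈ Icc (T - δ) T, ∀ τ ∈ StoppingTimesIn ℱ P t T,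
      Integrable (reward (fun s ω => f t s (U s ω) (V t s ω) ω) L (ξ t) t T τ) P ∧
      Integrable (reward (fun s ω => f t s (U' s ω) (V' t s ω) ω) L (ξ t) t T τ) P)
    (Y Y' : ℝ → Ω → ℝ)
    (hYmeas : Measurable fun p : ℝ × Ω => Y p.1 p.2)
    (hY'meas : Measurable fun p : ℝ × Ω => Y' p.1 p.2)
    (hY : ∀ t ∈ Icc (T - δ) T, IsEssSupFamily P
      (fun τ : StoppingTimesIn ℱ P t T =>
        P[reward (fun s ω => f t s (U s ω) (V t s ω) ω) L (ξ t) t T ↑τ | ℱ t])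
      (Y t))
    (hY' : ∀ t ∈ Icc (T - δ) T, IsEssSupFamily P
      (fun τ : StoppingTimesIn ℱ P t T =>
        P[reward (fun s ω => f t s (U' s ω) (V' t s ω) ω) L (ξ t) t T ↑τ | ℱ t])
      (Y' t)) :
    ∫⁻ ω, (∫⁻ t in Icc (T - δ) T, ENNReal.ofReal ((Y t ω - Y' t ω) ^ 2)) ∂P ≤
      ENNReal.ofReal (4 * c_f ^ 2 * (δ ^ 2 + δ)) *
        ((∫⁻ ω, (∫⁻ s in Icc (T - δ) T,
            ENNReal.ofReal ((U s ω - U' s ω) ^ 2)) ∂P) +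
         (∫⁻ ω, (∫⁻ t in Icc (T - δ) T,
            ∫⁻ s in Icc t T, ENNReal.ofReal ((V t s ω - V' t s ω) ^ 2)) ∂P)) := by
  have hUm := IsStronglyProgressive.measurable_uncurry hU
  have hU'm := IsStronglyProgressive.measurable_uncurry hU'
  set a : Ω → ℝ≥0∞ := fun ω => ∫⁻ s in Icc (T - δ) T, ENNReal.ofReal ((U s ω - U' s ω) ^ 2)
  set b : ℝ × Ω → ℝ≥0∞ := fun q =>
    ∫⁻ s in Icc q.1 T, ENNReal.ofReal ((V q.1 s q.2 - V' q.1 s q.2) ^ 2)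
  have ha : Measurable a := Measurable.lintegral_prod_right'
    (f := fun q : Ω × ℝ => ENNReal.ofReal ((U q.2 q.1 - U' q.2 q.1) ^ 2))
    (((hUm.comp measurable_swap).sub (hU'm.comp measurable_swap)).pow_const 2).ennreal_ofReal
  have hb : Measurable b :=
    measurable_setLIntegral_Icc_left (((hV.sub hV').pow_const 2).ennreal_ofReal) T
  have hslice : ∀ t ∈ Icc (T - δ) T, ∫⁻ ω, ENNReal.ofReal ((Y t ω - Y' t ω) ^ 2) ∂P ≤
      ENNReal.ofReal (2 * c_f ^ 2 * δ) * ∫⁻ ω, (a ω + b (t, ω)) ∂P := by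
    intro t ht
    refine (lintegral_ofReal_sq_sub_le_of_lipschitz (g := f t) (W := V t) (W' := V' t)
      (hf_meas.comp (measurable_const.prodMk measurable_id)) (hLip t) hUm hU'm
      (hV.comp (measurable_const.prodMk measurable_id))
      (hV'.comp (measurable_const.prodMk measurable_id))
      (hreward_int t ht) (hY t ht) (hY' t ht)).trans ?_
    gcongr ?_ * ∫⁻ ω, ?_ + _ ∂P with ω
    · exact ENNReal.ofReal_le_ofReal
        (mul_le_mul_of_nonneg_left (by linarith [ht.1]) (by positivity))
    · exact lintegral_mono_set (Icc_subset_Icc ht.1 le_rfl)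
  refine (lintegral_setLIntegral_Icc_le_of_forall_le
    ((hYmeas.sub hY'meas).pow_const 2).ennreal_ofReal ha hb ENNReal.ofReal_ne_top hslice).trans ?_
  rw [sub_sub_cancel]
  exact ofReal_two_mul_sq_mul_le hδ.le _ _

/-- Contraction estimate for the `Y`-component of the fixed-point
map on `[T-δ, T]`:
`E[∫_{T-δ}^T |Y(t) - Y'(t)|² dt] ≤ 4 c_f² (δ² + δ)
  (E[∫_{T-δ}^T |U - U'|² ds] + E[∫_{T-δ}^T ∫ₜᵀ |V(t,s) - V'(t,s)|² ds dt])`. -/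
theorem value_process_contraction_estimate
    {Ω : Type*} {m0 : MeasurableSpace Ω} (P : Measure Ω) [IsProbabilityMeasure P]
    (ℱ : Filtration ℝ m0) (T δ c_f : ℝ) (hT : 0 < T) (hδ : 0 < δ) (hδT : δ ≤ T)
    (f : ℝ → ℝ → ℝ → ℝ → Ω → ℝ)
    (hf_meas : Measurable fun p : ℝ × ℝ × ℝ × ℝ × Ω =>
      f p.1 p.2.1 p.2.2.1 p.2.2.2.1 p.2.2.2.2)
    (hf_prog : ∀ t y z, ProgMeasurable ℱ (fun s ω => f t s y z ω))
    (hLip : ∀ (t s y y' z z' : ℝ) (ω : Ω),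
      |f t s y z ω - f t s y' z' ω| ≤ c_f * (|y - y'| + |z - z'|))
    (L : ℝ → Ω → ℝ) (hL : StronglyAdapted ℱ L)
    (hLc : ∀ ω, ContinuousOn (fun v => L v ω) (Icc 0 T))
    (hLint : ∫⁻ ω, (⨆ v ∈ Icc (0 : ℝ) T, ENNReal.ofReal |L v ω|) ∂P < ⊤)
    (ξ : ℝ → Ω → ℝ) (hξ : ∀ t, Integrable (ξ t) P) (hξm : ∀ t, Measurable[ℱ T] (ξ t))
    (U U' : ℝ → Ω → ℝ) (hU : ProgMeasurable ℱ U) (hU' : ProgMeasurable ℱ U')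
    (V V' : ℝ → ℝ → Ω → ℝ)
    (hV : Measurable fun p : ℝ × ℝ × Ω => V p.1 p.2.1 p.2.2)
    (hV' : Measurable fun p : ℝ × ℝ × Ω => V' p.1 p.2.1 p.2.2)
    (hVprog : ∀ t, ProgMeasurable ℱ (V t)) (hV'prog : ∀ t, ProgMeasurable ℱ (V' t))
    (hreward_int : ∀ t ∈ Icc (T - δ) T, ∀ τ ∈ StoppingTimesIn ℱ P t T,
      Integrable (reward (fun s ω => f t s (U s ω) (V t s ω) ω) L (ξ t) t T τ) P ∧
      Integrable (reward (fun s ω => f t s (U' s ω) (V' t s ω) ω) L (ξ t) t T τ) P)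
    (hdiff_fin : (∫⁻ ω, (∫⁻ s in Icc (T - δ) T,
          ENNReal.ofReal ((U s ω - U' s ω) ^ 2)) ∂P) +
        (∫⁻ ω, (∫⁻ t in Icc (T - δ) T,
          ∫⁻ s in Icc t T, ENNReal.ofReal ((V t s ω - V' t s ω) ^ 2)) ∂P) < ⊤)
    (Y Y' : ℝ → Ω → ℝ)
    (hYmeas : Measurable fun p : ℝ × Ω => Y p.1 p.2)
    (hY'meas : Measurable fun p : ℝ × Ω => Y' p.1 p.2)
    (hY : ∀ t ∈ Icc (T - δ) T, IsEssSupFamily P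
      (fun τ : StoppingTimesIn ℱ P t T =>
        P[reward (fun s ω => f t s (U s ω) (V t s ω) ω) L (ξ t) t T ↑τ | ℱ t])
      (Y t))
    (hY' : ∀ t ∈ Icc (T - δ) T, IsEssSupFamily P
      (fun τ : StoppingTimesIn ℱ P t T =>
        P[reward (fun s ω => f t s (U' s ω) (V' t s ω) ω) L (ξ t) t T ↑τ | ℱ t])
      (Y' t)) :
    ∫⁻ ω, (∫⁻ t in Icc (T - δ) T, ENNReal.ofReal ((Y t ω - Y' t ω) ^ 2)) ∂P ≤
      ENNReal.ofReal (4 * c_f ^ 2 * (δ ^ 2 + δ)) *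
        ((∫⁻ ω, (∫⁻ s in Icc (T - δ) T,
            ENNReal.ofReal ((U s ω - U' s ω) ^ 2)) ∂P) +
         (∫⁻ ω, (∫⁻ t in Icc (T - δ) T,
            ∫⁻ s in Icc t T, ENNReal.ofReal ((V t s ω - V' t s ω) ^ 2)) ∂P)) :=
  value_process_contraction_estimate_general P ℱ T δ c_f hδ f hf_meas hLip L ξ U U' hU hU' V V' hV
    hV' hreward_int Y Y' hYmeas hY'meas hY hY'
end
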